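/- arXiv:1510.07377 — 2 statements merged into one kernel-verified Lean document; each statement's English description precedes it below -/
import Mathlib

section
/- Let 0 < α < 1, σ > 0, γ > (1+α)/σ, and consider the graded mesh tₙ = (n/N)^γ with steps kₙ = tₙ - tₙ₋₁ and k = max kₙ ≤ C/N. Suppose a function u satisfies ‖u''(t)‖ ≤ M t^(σ-2) for t ∈ (0,1]. Then maxₙ₌₂^N kₙ ∫_{Iₙ} ‖u''(t)‖ dt ≤ C k^(1+α) where Iₙ = (tₙ₋₁, tₙ] and C depends on M, α, σ, γ but not on N. -/
/-!
On the graded mesh `tₙ = xₙ ^ γ`, `xₙ = n / N`, the mean value theorem gives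
`kₙ ≤ γ xₙ^(γ-1) / N ≤ γ k xₙ^(γ-1)`, where `k ≥ k_N = 1 - (1 - 1/N)^γ ≥ 1/N`. For `n ≥ 2`,
`xₙ ≤ 2 xₙ₋₁`, so `tₙ ≤ 2^γ tₙ₋₁` and `‖u''‖ ≤ M (2^γ)² tₙ^(σ-2)` on `Iₙ`. Writing
`kₙ² = kₙ^(1-α) kₙ^(1+α)` and bounding the first factor by `tₙ^(1-α)` gives
`kₙ ∫_{Iₙ} ‖u''‖ ≤ M (2^γ)² (γ k)^(1+α) xₙ^(γσ-(1+α))`, and `γσ > 1 + α` makes the last power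
at most `1`.
-/

open Real MeasureTheory Set

lemma rpow_sub_rpow_le_mul_sub {x y γ : ℝ} (hy : 0 ≤ y) (hyx : y ≤ x) (hγ : 1 ≤ γ) :
    x ^ γ - y ^ γ ≤ γ * x ^ (γ - 1) * (x - y) := by
  have hderiv (s : ℝ) : HasDerivAt (· ^ γ) (γ * s ^ (γ - 1)) s :=
    hasDerivAt_rpow_const (Or.inr hγ)
  refine (convex_Icc y x).image_sub_le_mul_sub_of_deriv_le
    (fun s _ => (hderiv s).continuousAt.continuousWithinAt)
    (fun s _ => (hderiv s).differentiableAt.differentiableWithinAt) (fun s hs => ?_)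
    y ⟨le_rfl, hyx⟩ x ⟨hyx, le_rfl⟩ hyx
  rw [interior_Icc] at hs
  rw [(hderiv s).deriv]
  gcongr
  · linarith [hs.1]
  · exact hs.2.le

lemma one_div_le_one_sub_rpow {N γ : ℝ} (hN : 1 ≤ N) (hγ : 1 ≤ γ) :
    1 / N ≤ 1 - ((N - 1) / N) ^ γ := by
  have hN0 : 0 < N := by linarith
  have hy0 : 0 ≤ (N - 1) / N := div_nonneg (by linarith) hN0.le
  have hy1 : (N - 1) / N ≤ 1 := (div_le_one hN0).mpr (by linarith)
  have hcompl : 1 - (N - 1) / N = 1 / N := by field_simp; ring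
  linarith [rpow_le_self_of_le_one hy0 hy1 hγ]

lemma sq_le_rpow_mul_rpow {h b e α : ℝ} (h0 : 0 ≤ h) (hb : h ≤ b) (he : h ≤ e)
    (hα : -1 ≤ α) (hα1 : α ≤ 1) : h ^ 2 ≤ b ^ (1 - α) * e ^ (1 + α) := by
  have hsplit : h ^ 2 = h ^ (1 - α) * h ^ (1 + α) := by
    rw [← rpow_add' h0 (by norm_num), show 1 - α + (1 + α) = 2 by ring, rpow_two]
  rw [hsplit]
  exact mul_le_mul (rpow_le_rpow h0 hb (by linarith)) (rpow_le_rpow h0 he (by linarith))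
    (by positivity) (rpow_nonneg (h0.trans hb) _)

lemma rpow_sub_two_le {a s b c σ : ℝ} (ha : 0 < a) (has : a ≤ s) (hsb : s ≤ b)
    (hbc : b ≤ c * a) (hσ : 0 ≤ σ) : s ^ (σ - 2) ≤ c ^ 2 * b ^ (σ - 2) := by
  have hs : 0 < s := ha.trans_le has
  have hb : 0 < b := hs.trans_le hsb
  have hc : 0 < c := pos_of_mul_pos_left (hb.trans_le hbc) ha.le
  calc s ^ (σ - 2) = s ^ σ / s ^ 2 := by rw [rpow_sub hs, rpow_two]
    _ ≤ b ^ σ / (b / c) ^ 2 := by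
        gcongr
        rw [div_le_iff₀' hc]
        exact hbc.trans (by gcongr)
    _ = c ^ 2 * b ^ (σ - 2) := by rw [rpow_sub hb, rpow_two]; field_simp

lemma integral_le_of_le_rpow_sub_two {g : ℝ → ℝ} {M σ a b c : ℝ} (hM : 0 ≤ M) (hσ : 0 ≤ σ)
    (ha : 0 < a) (hab : a ≤ b) (hb1 : b ≤ 1) (hbc : b ≤ c * a)
    (hg : ∀ s ∈ Ioc (0 : ℝ) 1, g s ≤ M * s ^ (σ - 2)) (hgi : IntervalIntegrable g volume a b) :
    ∫ s in a..b, g s ≤ (b - a) * (M * c ^ 2 * b ^ (σ - 2)) := by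
  have hbound : ∀ s ∈ Icc a b, g s ≤ M * c ^ 2 * b ^ (σ - 2) := fun s ⟨has, hsb⟩ =>
    calc g s ≤ M * s ^ (σ - 2) := hg s ⟨ha.trans_le has, hsb.trans hb1⟩
      _ ≤ M * (c ^ 2 * b ^ (σ - 2)) := by gcongr; exact rpow_sub_two_le ha has hsb hbc hσ
      _ = M * c ^ 2 * b ^ (σ - 2) := by ring
  have hmono := intervalIntegral.integral_mono_on hab hgi intervalIntegrable_const hbound
  rwa [intervalIntegral.integral_const, smul_eq_mul] at hmono

lemma rpow_step_mul_integral_le {g : ℝ → ℝ} {α σ γ M k x y : ℝ} (hα : -1 ≤ α)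
    (hα1 : α ≤ 1) (hσ : 0 ≤ σ) (hγ : 1 ≤ γ) (hγσ : 1 + α ≤ γ * σ) (hM : 0 ≤ M)
    (hy : 0 < y) (hyx : y ≤ x) (hx1 : x ≤ 1) (hx2 : x ≤ 2 * y) (hxy : x - y ≤ k)
    (hg : ∀ s ∈ Ioc (0 : ℝ) 1, g s ≤ M * s ^ (σ - 2))
    (hgi : IntervalIntegrable g volume (y ^ γ) (x ^ γ)) :
    (x ^ γ - y ^ γ) * ∫ s in (y ^ γ)..(x ^ γ), g s
      ≤ M * (2 ^ γ) ^ 2 * γ ^ (1 + α) * k ^ (1 + α) := by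
  have hx : 0 < x := hy.trans_le hyx
  have hk : 0 ≤ k := by linarith
  have hγ0 : 0 ≤ γ := by linarith
  have hab : y ^ γ ≤ x ^ γ := by gcongr
  have hb1 : x ^ γ ≤ 1 := rpow_le_one hx.le hx1 hγ0
  have hbc : x ^ γ ≤ 2 ^ γ * y ^ γ := by
    rw [← mul_rpow (by norm_num) hy.le]
    gcongr
  have hstep : x ^ γ - y ^ γ ≤ γ * k * x ^ (γ - 1) :=
    calc x ^ γ - y ^ γ ≤ γ * x ^ (γ - 1) * (x - y) := rpow_sub_rpow_le_mul_sub hy.le hyx hγ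
      _ ≤ γ * x ^ (γ - 1) * k := by gcongr
      _ = γ * k * x ^ (γ - 1) := by ring
  have hsq := sq_le_rpow_mul_rpow (sub_nonneg.mpr hab) (sub_le_self _ (by positivity)) hstep
    hα hα1
  have hint := integral_le_of_le_rpow_sub_two hM hσ (by positivity) hab hb1 hbc hg hgi
  have hexp : (x ^ γ) ^ (1 - α) * (γ * k * x ^ (γ - 1)) ^ (1 + α) * (x ^ γ) ^ (σ - 2)
      = (γ * k) ^ (1 + α) * x ^ (γ * σ - (1 + α)) := by
    rw [mul_rpow (by positivity) (by positivity), ← rpow_mul hx.le, ← rpow_mul hx.le,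
      ← rpow_mul hx.le, mul_comm ((γ * k) ^ (1 + α)), ← mul_assoc, ← rpow_add hx,
      mul_right_comm, ← rpow_add hx]
    ring_nf
  calc (x ^ γ - y ^ γ) * ∫ s in (y ^ γ)..(x ^ γ), g s
      ≤ (x ^ γ - y ^ γ) * ((x ^ γ - y ^ γ) * (M * (2 ^ γ) ^ 2 * (x ^ γ) ^ (σ - 2))) := by
        gcongr
    _ = M * (2 ^ γ) ^ 2 * ((x ^ γ - y ^ γ) ^ 2 * (x ^ γ) ^ (σ - 2)) := by ring
    _ ≤ M * (2 ^ γ) ^ 2 * ((x ^ γ) ^ (1 - α) * (γ * k * x ^ (γ - 1)) ^ (1 + α)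
          * (x ^ γ) ^ (σ - 2)) := by gcongr
    _ = M * (2 ^ γ) ^ 2 * (γ * k) ^ (1 + α) * x ^ (γ * σ - (1 + α)) := by rw [hexp]; ring
    _ ≤ M * (2 ^ γ) ^ 2 * (γ * k) ^ (1 + α) * 1 := by
        gcongr
        exact rpow_le_one hx.le hx1 (by linarith)
    _ = M * (2 ^ γ) ^ 2 * γ ^ (1 + α) * k ^ (1 + α) := by rw [mul_rpow hγ0 hk]; ring

theorem stmt15_general (α σ γ M : ℝ) (hα : 0 < α) (hα1 : α < 1) (hσ : 0 < σ)
    (hγ : (1 + α) / σ < γ) (hγ1 : 1 ≤ γ) (hM : 0 < M)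
    (g : ℝ → ℝ)
    (hg : ∀ s ∈ Set.Ioc (0:ℝ) 1, g s ≤ M * s ^ (σ - 2))
    (hgi : ∀ a b : ℝ, 0 < a → a ≤ b → b ≤ 1 →
      IntervalIntegrable g MeasureTheory.volume a b) :
    ∃ C > 0, ∀ N : ℕ, 2 ≤ N → ∀ t : ℕ → ℝ, (∀ n, t n = ((n : ℝ) / N) ^ γ) →
      ∀ k : ℝ, (∀ m, 1 ≤ m → m ≤ N → t m - t (m - 1) ≤ k) →
        (∃ m, 1 ≤ m ∧ m ≤ N ∧ k = t m - t (m - 1)) →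
        ∀ n, 2 ≤ n → n ≤ N →
          (t n - t (n - 1)) * (∫ s in (t (n - 1))..(t n), g s) ≤ C * k ^ (1 + α) := by
  refine ⟨M * (2 ^ γ) ^ 2 * γ ^ (1 + α), by positivity, ?_⟩
  rintro N hN t ht k hk - n hn hnN
  have hN0 : (0 : ℝ) < N := by positivity
  have hprev (m : ℕ) (hm : 1 ≤ m) : t (m - 1) = (((m : ℝ) - 1) / N) ^ γ := by
    rw [ht, Nat.cast_sub hm, Nat.cast_one]
  have hkN : 1 / (N : ℝ) ≤ k := by
    have hlast := hk N (by omega) le_rfl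
    rw [hprev N (by omega), ht, div_self hN0.ne', one_rpow] at hlast
    exact (one_div_le_one_sub_rpow (by exact_mod_cast (by omega : 1 ≤ N)) hγ1).trans hlast
  have hn' : (2 : ℝ) ≤ n := by exact_mod_cast hn
  have hy : 0 < ((n : ℝ) - 1) / N := div_pos (by linarith) hN0
  have hyx : ((n : ℝ) - 1) / N ≤ n / N := by gcongr; linarith
  have hx1 : (n : ℝ) / N ≤ 1 := (div_le_one hN0).mpr (by exact_mod_cast hnN)
  rw [ht n, hprev n (by omega)]
  refine rpow_step_mul_integral_le (by linarith) hα1.le hσ.le hγ1 ((div_lt_iff₀ hσ).mp hγ).le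
    hM.le hy hyx hx1 ?_ ?_ hg
    (hgi _ _ (by positivity) (by gcongr) (rpow_le_one (by positivity) hx1 (by linarith)))
  · rw [← mul_div_assoc]
    gcongr
    linarith
  · calc (n : ℝ) / N - (n - 1) / N = 1 / N := by ring
      _ ≤ k := hkN

/-- Let `0 < α < 1`, `σ > 0`, `γ > (1+α)/σ`, graded mesh `tₙ = (n/N)^γ` (with `T = 1`),
steps `kₙ = tₙ - tₙ₋₁`, `k = max kₙ`. If `g = ‖u''‖` satisfies `0 ≤ g(t) ≤ M t^(σ-2)`
on `(0,1]`, then `maxₙ₌₂^N kₙ ∫_{Iₙ} g ≤ C k^(1+α)` with `C` independent of `N`. -/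
theorem stmt15 (α σ γ M : ℝ) (hα : 0 < α) (hα1 : α < 1) (hσ : 0 < σ)
    (hγ : (1 + α) / σ < γ) (hγ1 : 1 ≤ γ) (hM : 0 < M)
    (g : ℝ → ℝ) (hg0 : ∀ s ∈ Set.Ioc (0:ℝ) 1, 0 ≤ g s)
    (hg : ∀ s ∈ Set.Ioc (0:ℝ) 1, g s ≤ M * s ^ (σ - 2))
    (hgi : ∀ a b : ℝ, 0 < a → a ≤ b → b ≤ 1 →
      IntervalIntegrable g MeasureTheory.volume a b) :
    ∃ C > 0, ∀ N : ℕ, 2 ≤ N → ∀ t : ℕ → ℝ, (∀ n, t n = ((n : ℝ) / N) ^ γ) →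
      ∀ k : ℝ, (∀ m, 1 ≤ m → m ≤ N → t m - t (m - 1) ≤ k) →
        (∃ m, 1 ≤ m ∧ m ≤ N ∧ k = t m - t (m - 1)) →
        ∀ n, 2 ≤ n → n ≤ N →
          (t n - t (n - 1)) * (∫ s in (t (n - 1))..(t n), g s) ≤ C * k ^ (1 + α) :=
  stmt15_general α σ γ M hα hα1 hσ hγ hγ1 hM g hg hgi
end

section
/- Let 0 < α < 1, σ > 0, γ > (1+α)/σ, M > 0, T = 1, and graded mesh tₙ = (n/N)^γ. If ‖Au''(t)‖ ≤ M t^(σ-α-2) for t ∈ (0,1], then E₂ := Σₙ₌₂^N kₙ^(1+α) ∫_{Iₙ} ‖Au''(t)‖ dt ≤ C k^(1+α) where C is independent of N. -/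
/-!
On `Iₙ = [tₙ₋₁, tₙ]` with `n ≥ 2`, the mean value theorem for the convex map `x ↦ x ^ γ` and
`n ≤ 2 (n - 1)` give `kₙ ≤ γ 2^(γ-1) s^(1-1/γ) / N` for every `s ∈ Iₙ`, and `1/N ≤ k_N ≤ k`
by convexity again. Hence `kₙ^(1+α) g(s) ≤ M (γ 2^(γ-1) k)^(1+α) s^(β-1)` on `Iₙ`, where
`β = σ - (1+α)/γ > 0`; the intervals `I₂, …, I_N` tile `[t₁, 1]` and `∫₀¹ s^(β-1) ds = 1/β`.
-/

open Real MeasureTheory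

lemma rpow_sub_rpow_le_mul_rpow_mul_sub {γ x y : ℝ} (hγ : 1 ≤ γ) (hx : 0 ≤ x) (hxy : x ≤ y) :
    y ^ γ - x ^ γ ≤ γ * y ^ (γ - 1) * (y - x) := by
  rcases hxy.eq_or_lt with rfl | hlt
  · simp
  have hslope := (convexOn_rpow hγ).slope_le_of_hasDerivAt (Set.mem_Ici.2 hx)
    (Set.mem_Ici.2 (hx.trans hlt.le)) hlt (hasDerivAt_rpow_const (Or.inr hγ))
  rwa [slope_def_field, div_le_iff₀ (sub_pos.2 hlt)] at hslope

lemma intervalIntegral.sum_Icc_integral_adjacent_intervals {f : ℝ → ℝ} {μ : Measure ℝ}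
    {a : ℕ → ℝ} {m n : ℕ} (hmn : m ≤ n)
    (hint : ∀ k ∈ Finset.Icc (m + 1) n, IntervalIntegrable f μ (a (k - 1)) (a k)) :
    ∑ k ∈ Finset.Icc (m + 1) n, ∫ x in a (k - 1)..a k, f x ∂μ = ∫ x in a m..a n, f x ∂μ := by
  rw [← sum_integral_adjacent_intervals_Ico hmn fun k hk => by
    simpa using hint (k + 1) (Finset.mem_Icc.2 ⟨Nat.succ_le_succ hk.1, hk.2⟩)]
  rw [← Finset.Ico_add_one_right_eq_Icc, ← Finset.sum_Ico_add']
  simp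

lemma integral_rpow_sub_one_le_inv {a β : ℝ} (ha : 0 ≤ a) (hβ : 0 < β) :
    ∫ x in a..1, x ^ (β - 1) ≤ β⁻¹ := by
  rw [integral_rpow (Or.inl (by linarith)), sub_add_cancel, one_rpow, inv_eq_one_div]
  gcongr
  linarith [rpow_nonneg ha β]

lemma rpow_mul_integral_le_of_le_rpow {g : ℝ → ℝ} {p q h c M a b r : ℝ} (hp : 0 < p)
    (hpq : p ≤ q) (hh : 0 ≤ h) (hc : 0 ≤ c) (hM : 0 ≤ M) (hr : 0 ≤ r)
    (hgi : IntervalIntegrable g volume p q)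
    (hhc : ∀ s ∈ Set.Icc p q, h ≤ c * s ^ a) (hgM : ∀ s ∈ Set.Icc p q, g s ≤ M * s ^ b) :
    h ^ r * ∫ s in p..q, g s ≤ M * c ^ r * ∫ s in p..q, s ^ (a * r + b) := by
  have hzero : (0 : ℝ) ∉ Set.uIcc p q := by
    rw [Set.uIcc_of_le hpq]
    exact fun h0 => hp.not_ge h0.1
  rw [← intervalIntegral.integral_const_mul, ← intervalIntegral.integral_const_mul]
  refine intervalIntegral.integral_mono_on hpq (hgi.const_mul _)
    ((intervalIntegral.intervalIntegrable_rpow (Or.inr hzero)).const_mul _) fun s hs => ?_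
  have hs0 : 0 < s := hp.trans_le hs.1
  calc h ^ r * g s ≤ (c * s ^ a) ^ r * (M * s ^ b) :=
        mul_le_mul_of_nonneg (rpow_le_rpow hh (hhc s hs) hr) (hgM s hs) (by positivity)
          (by positivity)
    _ = M * c ^ r * s ^ (a * r + b) := by
        rw [mul_rpow hc (by positivity), ← rpow_mul hs0.le, rpow_add hs0]
        ring

noncomputable def gradedMesh (γ : ℝ) (N n : ℕ) : ℝ := ((n : ℝ) / N) ^ γ

namespace gradedMesh

variable {γ : ℝ} {N n : ℕ}

lemma nonneg : 0 ≤ gradedMesh γ N n := by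
  unfold gradedMesh; positivity

lemma pos (hN : N ≠ 0) (hn : n ≠ 0) : 0 < gradedMesh γ N n := by
  unfold gradedMesh; positivity

lemma monotone (hγ : 0 ≤ γ) : Monotone (gradedMesh γ N) := fun m n hmn => by
  unfold gradedMesh; gcongr

lemma le_one (hγ : 0 ≤ γ) (hn : n ≤ N) : gradedMesh γ N n ≤ 1 :=
  rpow_le_one (by positivity) (div_le_one_of_le₀ (by exact_mod_cast hn) (by positivity)) hγ

lemma self_eq_one (hN : N ≠ 0) : gradedMesh γ N N = 1 := by
  simp [gradedMesh, hN]

lemma sub_pred_le (hγ : 1 ≤ γ) (hn : 1 ≤ n) :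
    gradedMesh γ N n - gradedMesh γ N (n - 1) ≤ γ * ((n : ℝ) / N) ^ (γ - 1) / N := by
  calc _ ≤ γ * ((n : ℝ) / N) ^ (γ - 1) * ((n : ℝ) / N - ((n - 1 : ℕ) : ℝ) / N) :=
        rpow_sub_rpow_le_mul_rpow_mul_sub hγ (by positivity) (by gcongr; omega)
    _ = _ := by rw [Nat.cast_sub hn]; ring

lemma sub_pred_le_mul_rpow (hγ : 1 ≤ γ) (hn : 2 ≤ n) {k s : ℝ} (hk : (N : ℝ)⁻¹ ≤ k)
    (hs : gradedMesh γ N (n - 1) ≤ s) :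
    gradedMesh γ N n - gradedMesh γ N (n - 1) ≤ γ * 2 ^ (γ - 1) * k * s ^ (1 - γ⁻¹) := by
  have hs0 : 0 ≤ s := nonneg.trans hs
  have hx : ((n - 1 : ℕ) : ℝ) / N ≤ s ^ γ⁻¹ :=
    calc ((n - 1 : ℕ) : ℝ) / N = (gradedMesh γ N (n - 1)) ^ γ⁻¹ :=
          (rpow_rpow_inv (by positivity) (by linarith)).symm
      _ ≤ s ^ γ⁻¹ := rpow_le_rpow nonneg hs (by positivity)
  have hn2 : (n : ℝ) ≤ 2 * ((n - 1 : ℕ) : ℝ) := by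
    rw [Nat.cast_sub (by omega), Nat.cast_one]
    linarith [show (2 : ℝ) ≤ n by exact_mod_cast hn]
  have hy : (n : ℝ) / N ≤ 2 * s ^ γ⁻¹ :=
    calc (n : ℝ) / N ≤ 2 * ((n - 1 : ℕ) : ℝ) / N := by gcongr
      _ = 2 * (((n - 1 : ℕ) : ℝ) / N) := by ring
      _ ≤ 2 * s ^ γ⁻¹ := by gcongr
  have hpow : ((n : ℝ) / N) ^ (γ - 1) ≤ 2 ^ (γ - 1) * s ^ (1 - γ⁻¹) :=
    calc ((n : ℝ) / N) ^ (γ - 1) ≤ (2 * s ^ γ⁻¹) ^ (γ - 1) :=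
          rpow_le_rpow (by positivity) hy (by linarith)
      _ = 2 ^ (γ - 1) * s ^ (1 - γ⁻¹) := by
          rw [mul_rpow (by norm_num) (by positivity), ← rpow_mul hs0]
          congr 2
          field_simp
  calc _ ≤ γ * ((n : ℝ) / N) ^ (γ - 1) * (N : ℝ)⁻¹ := by
        rw [← div_eq_mul_inv]; exact sub_pred_le hγ (by omega)
    _ ≤ γ * (2 ^ (γ - 1) * s ^ (1 - γ⁻¹)) * k := by gcongr
    _ = _ := by ring

lemma inv_le_sub_pred_self (hγ : 1 ≤ γ) (hN : N ≠ 0) :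
    (N : ℝ)⁻¹ ≤ gradedMesh γ N N - gradedMesh γ N (N - 1) := by
  have hx0 : 0 ≤ ((N - 1 : ℕ) : ℝ) / N := by positivity
  have hx1 : ((N - 1 : ℕ) : ℝ) / N ≤ 1 :=
    div_le_one_of_le₀ (by exact_mod_cast N.sub_le 1) (by positivity)
  have hle : gradedMesh γ N (N - 1) ≤ ((N - 1 : ℕ) : ℝ) / N :=
    (rpow_le_rpow_of_exponent_ge' hx0 hx1 zero_le_one hγ).trans_eq (rpow_one _)
  have hsplit : ((N - 1 : ℕ) : ℝ) / N = 1 - (N : ℝ)⁻¹ := by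
    rw [Nat.cast_sub (by omega)]
    field_simp
    simp
  rw [self_eq_one hN]
  linarith

lemma sub_pred_rpow_mul_integral_le {g : ℝ → ℝ} {M b r k : ℝ} (hγ : 1 ≤ γ) (hn : 2 ≤ n)
    (hnN : n ≤ N) (hk : (N : ℝ)⁻¹ ≤ k) (hM : 0 ≤ M) (hr : 0 ≤ r)
    (hgi : ∀ p q : ℝ, 0 < p → p ≤ q → q ≤ 1 → IntervalIntegrable g volume p q)
    (hg : ∀ s ∈ Set.Ioc (0 : ℝ) 1, g s ≤ M * s ^ b) :
    (gradedMesh γ N n - gradedMesh γ N (n - 1)) ^ r *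
        ∫ s in gradedMesh γ N (n - 1)..gradedMesh γ N n, g s ≤
      M * (γ * 2 ^ (γ - 1) * k) ^ r *
        ∫ s in gradedMesh γ N (n - 1)..gradedMesh γ N n, s ^ ((1 - γ⁻¹) * r + b) := by
  have hpq := monotone (γ := γ) (N := N) (by linarith) (n.sub_le 1)
  have hp := pos (γ := γ) (show N ≠ 0 by omega) (show n - 1 ≠ 0 by omega)
  have hq1 := le_one (γ := γ) (by linarith) hnN
  have hk0 : 0 ≤ k := (inv_nonneg.2 N.cast_nonneg).trans hk
  exact rpow_mul_integral_le_of_le_rpow hp hpq (sub_nonneg.2 hpq) (by positivity) hM hr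
    (hgi _ _ hp hpq hq1) (fun s hs => sub_pred_le_mul_rpow hγ hn hk hs.1)
    (fun s hs => hg s ⟨hp.trans_le hs.1, hs.2.trans hq1⟩)

end gradedMesh

theorem stmt16_general (α σ γ M : ℝ) (hα : 0 < α) (hσ : 0 < σ)
    (hγ : (1 + α) / σ < γ) (hγ1 : 1 ≤ γ) (hM : 0 < M)
    (g : ℝ → ℝ)
    (hg : ∀ s ∈ Set.Ioc (0:ℝ) 1, g s ≤ M * s ^ (σ - α - 2))
    (hgi : ∀ a b : ℝ, 0 < a → a ≤ b → b ≤ 1 →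
      IntervalIntegrable g MeasureTheory.volume a b) :
    ∃ C > 0, ∀ N : ℕ, 2 ≤ N → ∀ t : ℕ → ℝ, (∀ n, t n = ((n : ℝ) / N) ^ γ) →
      ∀ k : ℝ, (∀ m, 1 ≤ m → m ≤ N → t m - t (m - 1) ≤ k) →
        (∃ m, 1 ≤ m ∧ m ≤ N ∧ k = t m - t (m - 1)) →
        (∑ n ∈ Finset.Icc 2 N,
            (t n - t (n - 1)) ^ (1 + α) * (∫ s in (t (n - 1))..(t n), g s)) ≤
          C * k ^ (1 + α) := by
  set β := σ - (1 + α) / γ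
  have hβ : 0 < β := by
    rw [div_lt_iff₀ hσ] at hγ
    rw [sub_pos, div_lt_iff₀ (by linarith)]
    linarith
  set K := γ * 2 ^ (γ - 1)
  refine ⟨M * K ^ (1 + α) / β, by positivity, ?_⟩
  rintro N hN t ht k hk -
  obtain rfl : t = gradedMesh γ N := funext ht
  have hN0 : N ≠ 0 := by omega
  have hkN : (N : ℝ)⁻¹ ≤ k :=
    (gradedMesh.inv_le_sub_pred_self hγ1 hN0).trans (hk N (by omega) le_rfl)
  have hk0 : 0 ≤ k := (inv_nonneg.2 N.cast_nonneg).trans hkN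
  have hexp : (1 - γ⁻¹) * (1 + α) + (σ - α - 2) = β - 1 := by ring
  calc _ ≤ ∑ n ∈ Finset.Icc 2 N, M * (K * k) ^ (1 + α) *
        ∫ s in gradedMesh γ N (n - 1)..gradedMesh γ N n, s ^ (β - 1) :=
        Finset.sum_le_sum fun n hn => by
          rw [← hexp]
          exact gradedMesh.sub_pred_rpow_mul_integral_le hγ1 (Finset.mem_Icc.1 hn).1
            (Finset.mem_Icc.1 hn).2 hkN hM.le (by linarith) hgi hg
    _ = M * (K * k) ^ (1 + α) * ∫ s in gradedMesh γ N 1..gradedMesh γ N N, s ^ (β - 1) := by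
        rw [← Finset.mul_sum, intervalIntegral.sum_Icc_integral_adjacent_intervals (by omega)
          fun _ _ => intervalIntegral.intervalIntegrable_rpow' (by linarith)]
    _ ≤ M * (K * k) ^ (1 + α) * β⁻¹ := by
        rw [gradedMesh.self_eq_one hN0]
        exact mul_le_mul_of_nonneg_left (integral_rpow_sub_one_le_inv gradedMesh.nonneg hβ)
          (by positivity)
    _ = M * K ^ (1 + α) / β * k ^ (1 + α) := by
        rw [mul_rpow (by positivity) hk0]
        ring

/-- Let `0 < α < 1`, `σ > 0`, `γ > (1+α)/σ`, `M > 0`, `T = 1`, graded mesh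
`tₙ = (n/N)^γ`. If `g = ‖Au''‖` satisfies `0 ≤ g(t) ≤ M t^(σ-α-2)` on `(0,1]`, then
`E₂ = Σₙ₌₂^N kₙ^(1+α) ∫_{Iₙ} g ≤ C k^(1+α)` with `C` independent of `N`. -/
theorem stmt16 (α σ γ M : ℝ) (hα : 0 < α) (hα1 : α < 1) (hσ : 0 < σ)
    (hγ : (1 + α) / σ < γ) (hγ1 : 1 ≤ γ) (hM : 0 < M)
    (g : ℝ → ℝ) (hg0 : ∀ s ∈ Set.Ioc (0:ℝ) 1, 0 ≤ g s)
    (hg : ∀ s ∈ Set.Ioc (0:ℝ) 1, g s ≤ M * s ^ (σ - α - 2))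
    (hgi : ∀ a b : ℝ, 0 < a → a ≤ b → b ≤ 1 →
      IntervalIntegrable g MeasureTheory.volume a b) :
    ∃ C > 0, ∀ N : ℕ, 2 ≤ N → ∀ t : ℕ → ℝ, (∀ n, t n = ((n : ℝ) / N) ^ γ) →
      ∀ k : ℝ, (∀ m, 1 ≤ m → m ≤ N → t m - t (m - 1) ≤ k) →
        (∃ m, 1 ≤ m ∧ m ≤ N ∧ k = t m - t (m - 1)) →
        (∑ n ∈ Finset.Icc 2 N,
            (t n - t (n - 1)) ^ (1 + α) * (∫ s in (t (n - 1))..(t n), g s)) ≤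
          C * k ^ (1 + α) :=
  stmt16_general α σ γ M hα hσ hγ hγ1 hM g hg hgi
end
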